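/- Let L = π and μ = q/H > 0. If n ≥ 1 is an odd integer, then Γ_n'(0) = −2μ·n·δ(n)·G_n, where Γ_n'(0) = nμ·∫₀^π (x − π/2)·cos(nx)/√(1 + μ²(x − π/2)²) dx; consequently, if moreover μ < 2/5, then Γ_n'(0) < 0. -/

import Mathlib

/-!
Substituting `x = t + π/2` turns `cos (n x)` into `-δ(n) sin (n t)` for odd `n`, and
`t sin (n t) / √(1 + (μt)²)` is even, which gives the identity.

For the sign, let `w = weight μ`, i.e. `w(t) = (1 + (μt)²)^(-3/2)`, the derivative of
`t / √(1 + (μt)²)`. Integrating `G_n` by parts twice gives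
`n² δ(n) G_n = w(π/2) - δ(n) ∫₀^{π/2} w'(t) sin (n t) dt`; since `w` decreases from `w(0) = 1`,
the last integral is at most `1 - w(π/2)` in absolute value. Hence `δ(n) G_n > 0` once
`w(π/2) > 1/2`, i.e. `(1 + μ²π²/4)^(3/2) < 2`, which holds for `|μ| < 2/5`.
-/

open Real MeasureTheory

/-- The hyper-geometric integral `G_n = ∫₀^{π/2} t sin(nt)/√(1+(μt)²) dt`. -/
noncomputable def G (μ : ℝ) (n : ℕ) : ℝ :=
  ∫ t in (0:ℝ)..(π / 2), t * Real.sin ((n : ℝ) * t) / Real.sqrt (1 + (μ * t) ^ 2)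

/-- `δ(n) = 1` if `n ≡ 1 (mod 4)`, `δ(n) = -1` if `n ≡ 3 (mod 4)`. -/
noncomputable def delta (n : ℕ) : ℝ := if n % 4 = 1 then 1 else -1

theorem intervalIntegral.integral_neg_to_self_of_even {f : ℝ → ℝ} (hf : Function.Even f) (a : ℝ)
    (hfi : IntervalIntegrable f volume 0 a) :
    ∫ x in -a..a, f x = 2 * ∫ x in 0..a, f x := by
  have hleft : ∫ x in -a..0, f x = ∫ x in 0..a, f x := by
    simpa [hf _] using (intervalIntegral.integral_comp_neg (a := 0) (b := a) f).symm
  have hfi' : IntervalIntegrable f volume (-a) 0 := by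
    simpa [hf _] using ((IntervalIntegrable.iff_comp_neg (f := f) (a := 0) (b := a)).mp hfi).symm
  rw [← intervalIntegral.integral_add_adjacent_intervals hfi' hfi, hleft, two_mul]

lemma abs_delta (n : ℕ) : |delta n| = 1 := by
  unfold delta; split_ifs <;> norm_num

lemma cos_mul_pi_div_two_of_odd {n : ℕ} (hn : Odd n) : cos (n * (π / 2)) = 0 := by
  obtain ⟨k, rfl⟩ := hn
  rw [show ((2 * k + 1 : ℕ) : ℝ) * (π / 2) = π / 2 + k * π by push_cast; ring,
    cos_add_nat_mul_pi, cos_pi_div_two, mul_zero]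

lemma sin_mul_pi_div_two_of_odd {n : ℕ} (hn : Odd n) : sin (n * (π / 2)) = delta n := by
  obtain ⟨k, rfl⟩ := hn
  rw [show ((2 * k + 1 : ℕ) : ℝ) * (π / 2) = π / 2 + k * π by push_cast; ring,
    sin_add_nat_mul_pi, sin_pi_div_two, mul_one, delta]
  rcases Nat.even_or_odd k with ⟨m, rfl⟩ | ⟨m, rfl⟩
  · rw [Even.neg_one_pow ⟨m, rfl⟩, if_pos (by omega)]
  · rw [Odd.neg_one_pow ⟨m, rfl⟩, if_neg (by omega)]

lemma cos_mul_add_pi_div_two_of_odd {n : ℕ} (hn : Odd n) (t : ℝ) :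
    cos (n * (t + π / 2)) = -(delta n * sin (n * t)) := by
  rw [mul_add, cos_add, cos_mul_pi_div_two_of_odd hn, sin_mul_pi_div_two_of_odd hn]
  ring

theorem integral_sub_pi_div_two_mul_cos_eq (μ : ℝ) {n : ℕ} (hn : Odd n) :
    ∫ x in 0..π, (x - π / 2) * cos (n * x) / √(1 + μ ^ 2 * (x - π / 2) ^ 2) =
      -2 * delta n * G μ n := by
  set g := fun t : ℝ => t * sin (n * t) / √(1 + (μ * t) ^ 2)
  have hg_even : Function.Even g := fun t => by simp [g]
  have hg_int : IntervalIntegrable g volume 0 (π / 2) :=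
    (Continuous.div (by fun_prop) (by fun_prop) fun t => by positivity).intervalIntegrable _ _
  have hG : G μ n = ∫ t in 0..π / 2, g t := rfl
  calc ∫ x in 0..π, (x - π / 2) * cos (n * x) / √(1 + μ ^ 2 * (x - π / 2) ^ 2)
      = ∫ x in 0..π, -(delta n * g (x - π / 2)) := intervalIntegral.integral_congr fun x _ => by
        simp only [g]
        rw [show (n : ℝ) * x = n * (x - π / 2 + π / 2) by ring, cos_mul_add_pi_div_two_of_odd hn,
          mul_pow]
        ring
    _ = ∫ t in -(π / 2)..π / 2, -(delta n * g t) := by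
      rw [intervalIntegral.integral_comp_sub_right (fun t => -(delta n * g t)), zero_sub, sub_half]
    _ = -2 * delta n * G μ n := by
      rw [intervalIntegral.integral_neg, intervalIntegral.integral_const_mul,
        intervalIntegral.integral_neg_to_self_of_even hg_even _ hg_int, hG]
      ring

theorem integral_mul_sin_of_odd {u u' u'' : ℝ → ℝ} {n : ℕ} (hn : Odd n)
    (hu : ∀ t ∈ Set.uIcc 0 (π / 2), HasDerivAt u (u' t) t)
    (hu' : ∀ t ∈ Set.uIcc 0 (π / 2), HasDerivAt u' (u'' t) t)
    (hu'' : IntervalIntegrable u'' volume 0 (π / 2)) (hu0 : u 0 = 0) :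
    ∫ t in 0..π / 2, u t * sin (n * t) =
      (delta n * u' (π / 2) - ∫ t in 0..π / 2, u'' t * sin (n * t)) / n ^ 2 := by
  have hn0 : (n : ℝ) ≠ 0 := by exact_mod_cast hn.pos.ne'
  have hcos : ∀ t, HasDerivAt (fun t => -cos (n * t) / n) (sin (n * t)) t := fun t => by
    simpa [neg_div, mul_div_assoc, div_self hn0, Pi.neg_def] using
      (((hasDerivAt_id t).const_mul (n : ℝ)).cos.div_const (n : ℝ)).neg
  have hsin : ∀ t, HasDerivAt (fun t => sin (n * t) / n) (cos (n * t)) t := fun t => by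
    simpa [mul_div_assoc, div_self hn0] using
      ((hasDerivAt_id t).const_mul (n : ℝ)).sin.div_const (n : ℝ)
  have hu'_cont : ContinuousOn u' (Set.uIcc 0 (π / 2)) := fun t ht =>
    (hu' t ht).continuousAt.continuousWithinAt
  have first : ∫ t in 0..π / 2, u t * sin (n * t) = (∫ t in 0..π / 2, u' t * cos (n * t)) / n := by
    rw [intervalIntegral.integral_mul_deriv_eq_deriv_mul hu (fun t _ => hcos t)
      hu'_cont.intervalIntegrable
      ((by fun_prop : Continuous fun t : ℝ => sin (n * t)).intervalIntegrable _ _),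
      cos_mul_pi_div_two_of_odd hn, hu0]
    simp only [neg_div, mul_neg, intervalIntegral.integral_neg, ← mul_div_assoc,
      intervalIntegral.integral_div]
    ring
  have second : ∫ t in 0..π / 2, u' t * cos (n * t) =
      (delta n * u' (π / 2) - ∫ t in 0..π / 2, u'' t * sin (n * t)) / n := by
    rw [intervalIntegral.integral_mul_deriv_eq_deriv_mul hu' (fun t _ => hsin t)
      hu'' ((by fun_prop : Continuous fun t : ℝ => cos (n * t)).intervalIntegrable _ _),
      sin_mul_pi_div_two_of_odd hn, mul_zero, sin_zero]
    simp only [← mul_div_assoc, intervalIntegral.integral_div]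
    ring
  rw [first, second]
  field_simp

theorem abs_integral_mul_sin_le_sub_of_deriv_nonpos {v v' : ℝ → ℝ} {a b : ℝ} (c : ℝ) (hab : a ≤ b)
    (hv : ∀ t ∈ Set.uIcc a b, HasDerivAt v (v' t) t) (hv' : IntervalIntegrable v' volume a b)
    (hv'_nonpos : ∀ t ∈ Set.Icc a b, v' t ≤ 0) :
    |∫ t in a..b, v' t * sin (c * t)| ≤ v a - v b := by
  have hsin : ContinuousOn (fun t => sin (c * t)) (Set.uIcc a b) := by fun_prop
  calc |∫ t in a..b, v' t * sin (c * t)|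
      ≤ ∫ t in a..b, |v' t * sin (c * t)| := intervalIntegral.abs_integral_le_integral_abs hab
    _ ≤ ∫ t in a..b, -v' t := by
      refine intervalIntegral.integral_mono_on hab (hv'.mul_continuousOn hsin).abs hv'.neg
        fun t ht => ?_
      rw [abs_mul, ← abs_of_nonpos (hv'_nonpos t ht)]
      exact mul_le_of_le_one_right (abs_nonneg _) (abs_sin_le_one _)
    _ = v a - v b := by
      rw [intervalIntegral.integral_neg, intervalIntegral.integral_eq_sub_of_hasDerivAt hv hv']
      ring

noncomputable def weight (μ t : ℝ) : ℝ := ((1 + (μ * t) ^ 2) * √(1 + (μ * t) ^ 2))⁻¹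

noncomputable def weightDeriv (μ t : ℝ) : ℝ := -(3 * μ ^ 2 * t * weight μ t / (1 + (μ * t) ^ 2))

section weight

variable (μ : ℝ)

lemma weight_pos (t : ℝ) : 0 < weight μ t := by
  unfold weight; positivity

lemma weight_zero : weight μ 0 = 1 := by
  simp [weight]

lemma continuous_weight : Continuous (weight μ) :=
  Continuous.inv₀ (by fun_prop) fun t => by positivity

lemma continuous_weightDeriv : Continuous (weightDeriv μ) := by
  have := continuous_weight μ
  exact (Continuous.div (by fun_prop) (by fun_prop) fun t => by positivity).neg

lemma weightDeriv_nonpos {t : ℝ} (ht : 0 ≤ t) : weightDeriv μ t ≤ 0 := by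
  have := weight_pos μ t
  unfold weightDeriv
  exact neg_nonpos.mpr (by positivity)

lemma hasDerivAt_one_add_sq (t : ℝ) :
    HasDerivAt (fun t => 1 + (μ * t) ^ 2) (2 * μ ^ 2 * t) t := by
  refine ((((hasDerivAt_id t).const_mul μ).pow 2).const_add 1).congr_deriv ?_
  simp only [Nat.cast_ofNat, id_eq, Nat.add_one_sub_one, pow_one, mul_one]
  ring

lemma hasDerivAt_sqrt_one_add_sq (t : ℝ) :
    HasDerivAt (fun t => √(1 + (μ * t) ^ 2)) (μ ^ 2 * t / √(1 + (μ * t) ^ 2)) t := by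
  refine ((hasDerivAt_one_add_sq μ t).sqrt (by positivity)).congr_deriv ?_
  field_simp

lemma hasDerivAt_div_sqrt_one_add_sq (t : ℝ) :
    HasDerivAt (fun t => t / √(1 + (μ * t) ^ 2)) (weight μ t) t := by
  have hr : 0 < √(1 + (μ * t) ^ 2) := by positivity
  refine ((hasDerivAt_id t).fun_div (hasDerivAt_sqrt_one_add_sq μ t) hr.ne').congr_deriv ?_
  have hr2 := Real.sq_sqrt (by positivity : (0 : ℝ) ≤ 1 + (μ * t) ^ 2)
  simp only [weight, id]
  set r := √(1 + (μ * t) ^ 2)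
  field_simp
  linear_combination (μ * t) ^ 2 * hr2

lemma hasDerivAt_weight (t : ℝ) :
    HasDerivAt (weight μ) (weightDeriv μ t) t := by
  have hr : 0 < √(1 + (μ * t) ^ 2) := by positivity
  refine (((hasDerivAt_one_add_sq μ t).fun_mul (hasDerivAt_sqrt_one_add_sq μ t)).fun_inv
    (by positivity)).congr_deriv ?_
  have hr2 := Real.sq_sqrt (by positivity : (0 : ℝ) ≤ 1 + (μ * t) ^ 2)
  simp only [weightDeriv, weight]
  set r := √(1 + (μ * t) ^ 2)
  field_simp
  linear_combination μ ^ 2 * t * hr2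

lemma one_half_lt_weight_pi_div_two (hμ : |μ| < 2 / 5) : 1 / 2 < weight μ (π / 2) := by
  have hμ2 : μ ^ 2 < 4 / 25 := by nlinarith [sq_abs μ, abs_nonneg μ]
  have hπ2 : π ^ 2 < 10 := by nlinarith [pi_lt_d2, pi_pos]
  have hs_lt : 1 + (μ * (π / 2)) ^ 2 < 7 / 5 := by
    nlinarith [mul_le_mul hμ2.le hπ2.le (sq_nonneg π) (by norm_num : (0 : ℝ) ≤ 4 / 25)]
  have hs_one : 1 ≤ 1 + (μ * (π / 2)) ^ 2 := by nlinarith [sq_nonneg (μ * (π / 2))]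
  rw [weight]
  generalize 1 + (μ * (π / 2)) ^ 2 = s at hs_lt hs_one ⊢
  have hsqrt : √s ≤ s := (Real.sqrt_le_left (by linarith)).mpr (by nlinarith)
  rw [one_div, inv_lt_inv₀ two_pos (by positivity)]
  nlinarith [Real.sqrt_nonneg s]

end weight

lemma G_eq_of_odd (μ : ℝ) {n : ℕ} (hn : Odd n) :
    G μ n = (delta n * weight μ (π / 2) -
      ∫ t in 0..π / 2, weightDeriv μ t * sin (n * t)) / n ^ 2 := by
  have hG : G μ n = ∫ t in 0..π / 2, t / √(1 + (μ * t) ^ 2) * sin (n * t) :=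
    intervalIntegral.integral_congr fun t _ => by ring
  rw [hG]
  refine integral_mul_sin_of_odd hn (fun t _ => hasDerivAt_div_sqrt_one_add_sq μ t)
    (fun t _ => hasDerivAt_weight μ t) ((continuous_weightDeriv μ).intervalIntegrable _ _)
    (by simp)

theorem delta_mul_G_pos {μ : ℝ} (hμ : |μ| < 2 / 5) {n : ℕ} (hn : Odd n) : 0 < delta n * G μ n := by
  set J := ∫ t in 0..π / 2, weightDeriv μ t * sin (n * t)
  have hJ : |J| ≤ 1 - weight μ (π / 2) := by
    rw [← weight_zero μ]
    exact abs_integral_mul_sin_le_sub_of_deriv_nonpos n pi_div_two_pos.le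
      (fun t _ => hasDerivAt_weight μ t) ((continuous_weightDeriv μ).intervalIntegrable _ _)
      fun t ht => weightDeriv_nonpos μ ht.1
  have hδJ : delta n * J ≤ |J| := by simpa [abs_mul, abs_delta] using le_abs_self (delta n * J)
  have hδδ : delta n * delta n = 1 := by rw [← abs_mul_abs_self, abs_delta, one_mul]
  have hw := one_half_lt_weight_pi_div_two μ hμ
  have hn2 : (0 : ℝ) < n ^ 2 := pow_pos (Nat.cast_pos.mpr hn.pos) 2
  rw [G_eq_of_odd μ hn, mul_div_assoc', mul_sub, ← mul_assoc, hδδ, one_mul]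
  exact div_pos (by linarith) hn2

theorem GammaPi_deriv_zero_odd_general (μ : ℝ) (hμ : 0 < μ) (n : ℕ) (hno : Odd n) :
    ((n : ℝ) * μ * ∫ x in (0:ℝ)..π,
        (x - π / 2) * Real.cos ((n : ℝ) * x) / Real.sqrt (1 + μ ^ 2 * (x - π / 2) ^ 2))
      = -2 * μ * (n : ℝ) * delta n * G μ n ∧
    (μ < 2 / 5 →
      ((n : ℝ) * μ * ∫ x in (0:ℝ)..π,
        (x - π / 2) * Real.cos ((n : ℝ) * x) / Real.sqrt (1 + μ ^ 2 * (x - π / 2) ^ 2)) < 0) := by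
  rw [integral_sub_pi_div_two_mul_cos_eq μ hno]
  refine ⟨by ring, fun hμ' => ?_⟩
  have hδG := delta_mul_G_pos (abs_lt.mpr ⟨by linarith, hμ'⟩) hno
  have hn : (0 : ℝ) < n := Nat.cast_pos.mpr hno.pos
  calc (n : ℝ) * μ * (-2 * delta n * G μ n) = -(2 * μ * n * (delta n * G μ n)) := by ring
    _ < 0 := neg_neg_of_pos (by positivity)

/-- For odd `n ≥ 1`, `Γ_n'(0) = nμ ∫₀^π (x-π/2)cos(nx)/√(1+μ²(x-π/2)²) dx`
equals `-2 μ n δ(n) G_n`; consequently, if `μ < 2/5` then `Γ_n'(0) < 0`. -/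
theorem GammaPi_deriv_zero_odd (μ : ℝ) (hμ : 0 < μ) (n : ℕ) (hn : 1 ≤ n) (hno : Odd n) :
    ((n : ℝ) * μ * ∫ x in (0:ℝ)..π,
        (x - π / 2) * Real.cos ((n : ℝ) * x) / Real.sqrt (1 + μ ^ 2 * (x - π / 2) ^ 2))
      = -2 * μ * (n : ℝ) * delta n * G μ n ∧
    (μ < 2 / 5 →
      ((n : ℝ) * μ * ∫ x in (0:ℝ)..π,
        (x - π / 2) * Real.cos ((n : ℝ) * x) / Real.sqrt (1 + μ ^ 2 * (x - π / 2) ^ 2)) < 0) :=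
  GammaPi_deriv_zero_odd_general μ hμ n hno
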